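/- arXiv:2403.05425 — 4 statements merged into one kernel-verified Lean document; each statement's English description precedes it below -/
import Mathlib

section
/- Let B, B̂ be D × d real matrices with BᵀB = B̂ᵀB̂ = I_d, and let Δ = ‖Bᵀ(I_D - B̂B̂ᵀ)‖_F. If 0 ≤ Δ < 1, then |det(BᵀB̂)| ≥ √(1 - Δ²). -/
open Matrix

/-- The Frobenius norm of a real matrix. -/
noncomputable def frob {n m : ℕ} (A : Matrix (Fin n) (Fin m) ℝ) : ℝ :=
  Real.sqrt (Matrix.trace (Aᵀ * A))

/-- Weierstrass product inequality. -/
lemma weier_aux {ι : Type*} (s : Finset ι) (f : ι → ℝ) (h0 : ∀ i ∈ s, 0 ≤ f i)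
    (h1 : ∀ i ∈ s, f i ≤ 1) : 1 - ∑ i ∈ s, (1 - f i) ≤ ∏ i ∈ s, f i := by
  induction s using Finset.cons_induction with
  | empty => simp
  | cons a s ha ih =>
    rw [Finset.prod_cons, Finset.sum_cons]
    have hS : 0 ≤ ∑ i ∈ s, (1 - f i) :=
      Finset.sum_nonneg fun i hi => by linarith [h1 i (Finset.mem_cons_of_mem hi)]
    have ih' := ih (fun i hi => h0 i (Finset.mem_cons_of_mem hi))
      (fun i hi => h1 i (Finset.mem_cons_of_mem hi))
    have ha0 := h0 a (Finset.mem_cons_self a s)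
    have ha1 := h1 a (Finset.mem_cons_self a s)
    nlinarith [mul_le_mul_of_nonneg_left ih' ha0]

/-- Trace equals sum of eigenvalues, real case. -/
lemma trace_eq_sum_eig_aux {n : ℕ} {A : Matrix (Fin n) (Fin n) ℝ} (hA : A.IsHermitian) :
    A.trace = ∑ i, hA.eigenvalues i := by
  conv_lhs => rw [hA.spectral_theorem]
  rw [Unitary.conjStarAlgAut_apply, Matrix.trace_mul_comm, ← mul_assoc, Unitary.coe_star_mul_self, one_mul, trace_diagonal]
  simp

/-- Eigenvalues are at most 1 when `1 - A` is PSD. -/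
lemma eig_le_one_aux {n : ℕ} {A : Matrix (Fin n) (Fin n) ℝ} (hA : A.IsHermitian)
    (hC : (1 - A).PosSemidef) (i : Fin n) : hA.eigenvalues i ≤ 1 := by
  set v : Fin n → ℝ := ⇑(hA.eigenvectorBasis i) with hv
  have h2 := hC.dotProduct_mulVec_nonneg v
  have hvv : dotProduct (star v) v = 1 := by
    have := hA.eigenvectorBasis.orthonormal.1 i
    have h := EuclideanSpace.inner_eq_star_dotProduct (hA.eigenvectorBasis i)
      (hA.eigenvectorBasis i)
    rw [inner_self_eq_norm_sq_to_K, this] at h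
    simpa using h.symm
  have heig : dotProduct (star v) (A *ᵥ v) = hA.eigenvalues i := by
    rw [hv, hA.mulVec_eigenvectorBasis, dotProduct_smul]
    simp only [smul_eq_mul]
    rw [← hv, hvv, mul_one]
  rw [sub_mulVec, one_mulVec, dotProduct_sub, hvv, heig] at h2
  linarith

theorem abs_det_ge (D d : ℕ) (hd : d ≤ D) (B Bhat : Matrix (Fin D) (Fin d) ℝ)
    (hB : Bᵀ * B = 1) (hBhat : Bhatᵀ * Bhat = 1)
    (hΔ : frob (Bᵀ * ((1 : Matrix (Fin D) (Fin D) ℝ) - Bhat * Bhatᵀ)) < 1) :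
    Real.sqrt (1 - frob (Bᵀ * ((1 : Matrix (Fin D) (Fin D) ℝ) - Bhat * Bhatᵀ)) ^ 2)
      ≤ |(Bᵀ * Bhat).det| := by
  set M := Bᵀ * Bhat with hM
  set A := Mᵀ * M with hA
  set X := Bᵀ * ((1 : Matrix (Fin D) (Fin D) ℝ) - Bhat * Bhatᵀ) with hX
  -- A is PSD
  have hApsd : A.PosSemidef := by
    have := Matrix.posSemidef_conjTranspose_mul_self M
    rwa [Matrix.conjTranspose_eq_transpose_of_trivial] at this
  -- 1 - A is PSD
  have h1A : ((1 : Matrix (Fin d) (Fin d) ℝ) - A).PosSemidef := by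
    have key : (1 : Matrix (Fin d) (Fin d) ℝ) - A
        = (((1 : Matrix (Fin D) (Fin D) ℝ) - B * Bᵀ) * Bhat)ᵀ
          * (((1 : Matrix (Fin D) (Fin D) ℝ) - B * Bᵀ) * Bhat) := by
      have hQ : ((1 : Matrix (Fin D) (Fin D) ℝ) - B * Bᵀ)ᵀ = 1 - B * Bᵀ := by
        simp [Matrix.transpose_sub, Matrix.transpose_mul]
      rw [Matrix.transpose_mul, hQ]
      have hproj : ((1 : Matrix (Fin D) (Fin D) ℝ) - B * Bᵀ)
          * ((1 : Matrix (Fin D) (Fin D) ℝ) - B * Bᵀ) = 1 - B * Bᵀ := by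
        simp only [Matrix.sub_mul, Matrix.mul_sub, Matrix.one_mul, Matrix.mul_one]
        rw [show B * Bᵀ * (B * Bᵀ) = B * (Bᵀ * B) * Bᵀ by
          simp only [Matrix.mul_assoc], hB, Matrix.mul_one]
        abel
      rw [Matrix.mul_assoc, ← Matrix.mul_assoc ((1 : Matrix (Fin D) (Fin D) ℝ) - B * Bᵀ), hproj]
      simp only [Matrix.mul_sub, Matrix.sub_mul, Matrix.one_mul, Matrix.mul_one, hA, hM]
      rw [Matrix.transpose_mul, Matrix.transpose_transpose, hBhat]
      simp only [Matrix.mul_assoc]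
    rw [key]
    have := Matrix.posSemidef_conjTranspose_mul_self
      (((1 : Matrix (Fin D) (Fin D) ℝ) - B * Bᵀ) * Bhat)
    rwa [Matrix.conjTranspose_eq_transpose_of_trivial] at this
  -- trace(XᵀX) = d - trace A
  have htrX : Matrix.trace (Xᵀ * X) = (d : ℝ) - A.trace := by
    rw [Matrix.trace_mul_comm]
    have hXX : X * Xᵀ = 1 - M * Mᵀ := by
      rw [hX, Matrix.transpose_mul]
      have hP : ((1 : Matrix (Fin D) (Fin D) ℝ) - Bhat * Bhatᵀ)ᵀ = 1 - Bhat * Bhatᵀ := by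
        simp [Matrix.transpose_sub, Matrix.transpose_mul]
      rw [hP, Matrix.transpose_transpose]
      have hproj : ((1 : Matrix (Fin D) (Fin D) ℝ) - Bhat * Bhatᵀ)
          * ((1 : Matrix (Fin D) (Fin D) ℝ) - Bhat * Bhatᵀ) = 1 - Bhat * Bhatᵀ := by
        simp only [Matrix.sub_mul, Matrix.mul_sub, Matrix.one_mul, Matrix.mul_one]
        rw [show Bhat * Bhatᵀ * (Bhat * Bhatᵀ) = Bhat * (Bhatᵀ * Bhat) * Bhatᵀ by
          simp only [Matrix.mul_assoc], hBhat, Matrix.mul_one]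
        abel
      rw [show Bᵀ * ((1 : Matrix (Fin D) (Fin D) ℝ) - Bhat * Bhatᵀ)
            * (((1 : Matrix (Fin D) (Fin D) ℝ) - Bhat * Bhatᵀ) * B)
          = Bᵀ * (((1 : Matrix (Fin D) (Fin D) ℝ) - Bhat * Bhatᵀ)
            * ((1 : Matrix (Fin D) (Fin D) ℝ) - Bhat * Bhatᵀ) * B) by
          simp only [Matrix.mul_assoc], hproj]
      simp only [Matrix.mul_sub, Matrix.sub_mul, Matrix.one_mul, Matrix.mul_one, hM,
        Matrix.transpose_mul, Matrix.transpose_transpose]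
      rw [hB]
      simp only [Matrix.mul_assoc]
    rw [hXX]
    have htrMM : Matrix.trace (M * Mᵀ) = A.trace := by
      rw [hA, Matrix.trace_mul_comm]
    rw [Matrix.trace_sub, htrMM, Matrix.trace_one]
    simp
  -- frob X ^ 2 = d - trace A
  have htr_nonneg : 0 ≤ Matrix.trace (Xᵀ * X) := by
    rw [Matrix.trace]
    refine Finset.sum_nonneg fun i _ => ?_
    rw [Matrix.diag_apply, Matrix.mul_apply]
    exact Finset.sum_nonneg fun j _ => by
      rw [Matrix.transpose_apply]; exact mul_self_nonneg _
  have hfrob2 : frob X ^ 2 = (d : ℝ) - A.trace := by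
    rw [frob, Real.sq_sqrt htr_nonneg, htrX]
  -- eigenvalues
  have hAh : A.IsHermitian := hApsd.isHermitian
  have hdet : A.det = ∏ i, hAh.eigenvalues i := hAh.det_eq_prod_eigenvalues
  have htr : A.trace = ∑ i, hAh.eigenvalues i := trace_eq_sum_eig_aux hAh
  have h0 : ∀ i, 0 ≤ hAh.eigenvalues i := hApsd.eigenvalues_nonneg
  have h1 : ∀ i, hAh.eigenvalues i ≤ 1 := eig_le_one_aux hAh h1A
  -- key inequality
  have hsum : ∑ i : Fin d, (1 - hAh.eigenvalues i) = (d : ℝ) - A.trace := by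
    rw [Finset.sum_sub_distrib, htr]
    simp
  have hkey : 1 - frob X ^ 2 ≤ A.det := by
    rw [hfrob2, hdet, ← hsum]
    exact weier_aux _ _ (fun i _ => h0 i) (fun i _ => h1 i)
  -- conclude
  have hdetA : A.det = (M.det) ^ 2 := by
    rw [hA, Matrix.det_mul, Matrix.det_transpose, sq]
  calc Real.sqrt (1 - frob X ^ 2) ≤ Real.sqrt (A.det) := Real.sqrt_le_sqrt hkey
    _ = |M.det| := by rw [hdetA, Real.sqrt_sq_eq_abs]
end

section
/- Let g : ℝ^{d_e} → ℝ be continuously differentiable with ‖∇g‖_∞ ≤ C₂ componentwise (i.e., each partial derivative is bounded by C₂). Let B ∈ ℝ^{D×d_e} with BᵀB = I, and B̂ ∈ ℝ^{D×d} with B̂ᵀB̂ = I, d ≥ d_e. Define f(x) = g(Bᵀx) and f̂(x) = g(BᵀB̂B̂ᵀx). Then for every x with ‖x‖₂ ≤ 1 + ε̄, |f(x) − f̂(x)| ≤ (1+ε̄)·C₂·√d·‖Bᵀ(I_D − B̂B̂ᵀ)‖_F. -/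
open Matrix

/-- The Euclidean norm of a vector in `Fin n → ℝ`. -/
noncomputable def enorm {n : ℕ} (x : Fin n → ℝ) : ℝ := Real.sqrt (∑ i, x i ^ 2)

lemma enorm_nonneg' {n : ℕ} (x : Fin n → ℝ) : 0 ≤ _root_.enorm x := Real.sqrt_nonneg _

lemma frob_nonneg' {n m : ℕ} (A : Matrix (Fin n) (Fin m) ℝ) : 0 ≤ frob A := Real.sqrt_nonneg _

/-- ℓ¹ vs ℓ² comparison. -/
lemma sum_abs_le_sqrt_card {n : ℕ} (w : Fin n → ℝ) :
    ∑ i, |w i| ≤ Real.sqrt n * _root_.enorm w := by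
  have h1 : (∑ i, |w i|) ^ 2 ≤ (n : ℝ) * ∑ i, w i ^ 2 := by
    have := Finset.sum_mul_sq_le_sq_mul_sq Finset.univ (fun _ : Fin n => (1 : ℝ))
      (fun i => |w i|)
    simpa [sq_abs] using this
  have h2 : ∑ i, |w i| = Real.sqrt ((∑ i, |w i|) ^ 2) := by
    rw [Real.sqrt_sq (Finset.sum_nonneg fun i _ => abs_nonneg _)]
  rw [h2, _root_.enorm, ← Real.sqrt_mul (by positivity)]
  exact Real.sqrt_le_sqrt h1

lemma fderiv_apply_bound {de : ℕ} {C₂ : ℝ} (hC : 0 ≤ C₂) (g : (Fin de → ℝ) → ℝ)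
    (hpart : ∀ (z : Fin de → ℝ) (i : Fin de), |fderiv ℝ g z (Pi.single i 1)| ≤ C₂)
    (z w : Fin de → ℝ) :
    |fderiv ℝ g z w| ≤ C₂ * Real.sqrt de * _root_.enorm w := by
  have hrep : fderiv ℝ g z w = ∑ i, w i * fderiv ℝ g z (Pi.single i 1) := by
    have h := LinearMap.pi_apply_eq_sum_univ
      ((fderiv ℝ g z) : (Fin de → ℝ) →ₗ[ℝ] ℝ) w
    have hs : ∀ i : Fin de, (fun j => if i = j then (1:ℝ) else 0) = Pi.single i 1 := by
      intro i; funext j; simp [Pi.single_apply, eq_comm]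
    simp only [hs] at h
    simpa using h
  calc |fderiv ℝ g z w| ≤ ∑ i, |w i * fderiv ℝ g z (Pi.single i 1)| := by
        rw [hrep]; exact Finset.abs_sum_le_sum_abs _ _
    _ ≤ ∑ i, |w i| * C₂ := Finset.sum_le_sum fun i _ => by
        rw [abs_mul]; exact mul_le_mul_of_nonneg_left (hpart z i) (abs_nonneg _)
    _ = C₂ * ∑ i, |w i| := by rw [← Finset.sum_mul, mul_comm]
    _ ≤ C₂ * (Real.sqrt de * _root_.enorm w) :=
        mul_le_mul_of_nonneg_left (sum_abs_le_sqrt_card w) hC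
    _ = C₂ * Real.sqrt de * _root_.enorm w := by ring

/-- Mean value inequality with the Euclidean norm. -/
lemma mvt_bound {de : ℕ} {C₂ : ℝ} (hC : 0 ≤ C₂) (g : (Fin de → ℝ) → ℝ) (hg : ContDiff ℝ 1 g)
    (hpart : ∀ (z : Fin de → ℝ) (i : Fin de), |fderiv ℝ g z (Pi.single i 1)| ≤ C₂)
    (u v : Fin de → ℝ) :
    |g u - g v| ≤ C₂ * Real.sqrt de * _root_.enorm (u - v) := by
  set h : ℝ → ℝ := fun t => g (v + t • (u - v)) with hh
  have hderiv : ∀ t : ℝ,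
      HasDerivAt h (fderiv ℝ g (v + t • (u - v)) (u - v)) t := by
    intro t
    have hpath : HasDerivAt (fun t : ℝ => v + t • (u - v)) (u - v) t := by
      simpa using ((hasDerivAt_id t).smul_const (u - v)).const_add v
    exact ((hg.differentiable one_ne_zero _).hasFDerivAt).comp_hasDerivAt t hpath
  have hb : ∀ t ∈ Set.Ico (0:ℝ) 1,
      ‖fderiv ℝ g (v + t • (u - v)) (u - v)‖ ≤ C₂ * Real.sqrt de * _root_.enorm (u - v) := by
    intro t _
    simpa [Real.norm_eq_abs] using fderiv_apply_bound hC g hpart (v + t • (u - v)) (u - v)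
  have := norm_image_sub_le_of_norm_deriv_le_segment'
    (f := h) (f' := fun t => fderiv ℝ g (v + t • (u - v)) (u - v))
    (C := C₂ * Real.sqrt de * _root_.enorm (u - v))
    (fun t _ => (hderiv t).hasDerivWithinAt) hb 1 (by norm_num)
  have h1 : h 1 = g u := by simp [hh]
  have h0 : h 0 = g v := by simp [hh]
  rw [h1, h0] at this
  simpa [Real.norm_eq_abs] using this

/-- Operator bound by the Frobenius norm. -/
lemma mulVec_enorm_le {n m : ℕ} (A : Matrix (Fin n) (Fin m) ℝ) (x : Fin m → ℝ) :
    _root_.enorm (A.mulVec x) ≤ frob A * _root_.enorm x := by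
  have htr : Matrix.trace (Aᵀ * A) = ∑ i, ∑ j, A i j ^ 2 := by
    rw [Matrix.trace]
    simp only [Matrix.diag, Matrix.mul_apply, Matrix.transpose_apply]
    rw [Finset.sum_comm]
    simp [sq]
  have hrow : ∀ i, (A.mulVec x i) ^ 2 ≤ (∑ j, A i j ^ 2) * ∑ j, x j ^ 2 := by
    intro i
    simpa [Matrix.mulVec, dotProduct] using
      Finset.sum_mul_sq_le_sq_mul_sq Finset.univ (fun j => A i j) x
  have hsum : ∑ i, (A.mulVec x i) ^ 2 ≤ (∑ i, ∑ j, A i j ^ 2) * ∑ j, x j ^ 2 := by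
    rw [Finset.sum_mul]
    exact Finset.sum_le_sum fun i _ => hrow i
  calc _root_.enorm (A.mulVec x) = Real.sqrt (∑ i, (A.mulVec x i) ^ 2) := rfl
    _ ≤ Real.sqrt ((∑ i, ∑ j, A i j ^ 2) * ∑ j, x j ^ 2) := Real.sqrt_le_sqrt hsum
    _ = frob A * _root_.enorm x := by
        rw [Real.sqrt_mul (by positivity), frob, htr, _root_.enorm]

theorem approx_error_bound (D d de : ℕ) (hde : de ≤ d) (hdD : d ≤ D)
    (C₂ ε : ℝ) (hC : 0 < C₂) (hε : 0 ≤ ε)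
    (g : (Fin de → ℝ) → ℝ) (hg : ContDiff ℝ 1 g)
    (hpart : ∀ (z : Fin de → ℝ) (i : Fin de), |fderiv ℝ g z (Pi.single i 1)| ≤ C₂)
    (B : Matrix (Fin D) (Fin de) ℝ) (hB : Bᵀ * B = 1)
    (Bhat : Matrix (Fin D) (Fin d) ℝ) (hBhat : Bhatᵀ * Bhat = 1) :
    ∀ x : Fin D → ℝ, _root_.enorm x ≤ 1 + ε →
      |g (Bᵀ.mulVec x) - g ((Bᵀ * Bhat * Bhatᵀ).mulVec x)|
        ≤ (1 + ε) * C₂ * Real.sqrt d *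
            frob (Bᵀ * ((1 : Matrix (Fin D) (Fin D) ℝ) - Bhat * Bhatᵀ)) := by
  intro x hx
  set M : Matrix (Fin de) (Fin D) ℝ := Bᵀ * ((1 : Matrix (Fin D) (Fin D) ℝ) - Bhat * Bhatᵀ)
    with hM
  have hMdiff : Bᵀ.mulVec x - (Bᵀ * Bhat * Bhatᵀ).mulVec x = M.mulVec x := by
    rw [hM, Matrix.mul_sub, Matrix.mul_one, Matrix.sub_mulVec, Matrix.mul_assoc]
  have h1 : |g (Bᵀ.mulVec x) - g ((Bᵀ * Bhat * Bhatᵀ).mulVec x)|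
      ≤ C₂ * Real.sqrt de * _root_.enorm (M.mulVec x) := by
    have := mvt_bound hC.le g hg hpart (Bᵀ.mulVec x) ((Bᵀ * Bhat * Bhatᵀ).mulVec x)
    rwa [hMdiff] at this
  have h2 : _root_.enorm (M.mulVec x) ≤ frob M * (1 + ε) :=
    (mulVec_enorm_le M x).trans
      (mul_le_mul_of_nonneg_left hx (frob_nonneg' M))
  have hsq : Real.sqrt de ≤ Real.sqrt d := Real.sqrt_le_sqrt (by exact_mod_cast hde)
  calc |g (Bᵀ.mulVec x) - g ((Bᵀ * Bhat * Bhatᵀ).mulVec x)|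
      ≤ C₂ * Real.sqrt de * _root_.enorm (M.mulVec x) := h1
    _ ≤ C₂ * Real.sqrt de * (frob M * (1 + ε)) :=
        mul_le_mul_of_nonneg_left h2 (by positivity)
    _ ≤ C₂ * Real.sqrt d * (frob M * (1 + ε)) := by
        have hP : (0:ℝ) ≤ frob M * (1 + ε) := mul_nonneg (frob_nonneg' M) (by linarith)
        exact mul_le_mul_of_nonneg_right (mul_le_mul_of_nonneg_left hsq hC.le) hP
    _ = (1 + ε) * C₂ * Real.sqrt d * frob M := by ring
end

section
/- Let μ_n and σ_n be the posterior mean and standard deviation of a Gaussian process with kernel k at step n, and g ∈ H_k with ‖g‖_{H_k} ≤ R so that |μ_n(z) − g(z)| ≤ R σ_n(z) for all z. Let ξ_n = max_{i≤n} g(z_i), I_n(z) = max{0, g(z) − ξ_n}, and α_n^{EI}(z) = σ_n(z)·h((μ_n(z) − ξ_n)/σ_n(z)) where h(x) = xΦ(x) + φ(x). Then α_n^{EI}(z) ≤ I_n(z) + (R+1)σ_n(z). -/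
/-! Since `0 ≤ Φ ≤ 1` and `φ ≤ 1`, we have `hEI x ≤ max x 0 + 1`.
Scaling by `σ ≥ 0` gives `σ · hEI ((μ - ξ) / σ) ≤ max (μ - ξ) 0 + σ`, and the RKHS error bound
`μ ≤ g + R σ` turns `max (μ - ξ) 0` into at most `max 0 (g - ξ) + R σ`. -/

noncomputable def stdPdf (x : ℝ) : ℝ := (Real.sqrt (2 * Real.pi))⁻¹ * Real.exp (-x ^ 2 / 2)

noncomputable def stdCdf (x : ℝ) : ℝ := ∫ t in Set.Iic x, stdPdf t

noncomputable def hEI (x : ℝ) : ℝ := x * stdCdf x + stdPdf x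

open MeasureTheory ProbabilityTheory

lemma stdPdf_eq_gaussianPDFReal : stdPdf = gaussianPDFReal 0 1 := by
  ext x
  simp [stdPdf, gaussianPDFReal]

lemma stdCdf_eq_cdf_gaussianReal (x : ℝ) : stdCdf x = cdf (gaussianReal 0 1) x := by
  rw [cdf_eq_real, measureReal_def, gaussianReal_apply_eq_integral _ one_ne_zero,
    ENNReal.toReal_ofReal (setIntegral_nonneg measurableSet_Iic fun t _ ↦
      gaussianPDFReal_nonneg 0 1 t), stdCdf, stdPdf_eq_gaussianPDFReal]

lemma stdPdf_le_one (x : ℝ) : stdPdf x ≤ 1 := by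
  have hexp : Real.exp (-x ^ 2 / 2) ≤ 1 := Real.exp_le_one_iff.mpr (by nlinarith [sq_nonneg x])
  have hsqrt : 1 ≤ Real.sqrt (2 * Real.pi) :=
    Real.one_le_sqrt.mpr (by nlinarith [Real.pi_gt_three])
  calc stdPdf x ≤ 1 * 1 :=
        mul_le_mul (inv_le_one_of_one_le₀ hsqrt) hexp (Real.exp_nonneg _) zero_le_one
    _ = 1 := one_mul 1

lemma hEI_le_max_add_one (x : ℝ) : hEI x ≤ max x 0 + 1 := by
  have hΦ₀ := stdCdf_eq_cdf_gaussianReal x ▸ cdf_nonneg (gaussianReal 0 1) x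
  have hΦ₁ := stdCdf_eq_cdf_gaussianReal x ▸ cdf_le_one (gaussianReal 0 1) x
  have hxΦ : x * stdCdf x ≤ max x 0 := by
    rcases le_total 0 x with hx | hx
    · exact (mul_le_of_le_one_right hx hΦ₁).trans (le_max_left _ _)
    · exact (mul_nonpos_of_nonpos_of_nonneg hx hΦ₀).trans (le_max_right _ _)
  unfold hEI
  linarith [stdPdf_le_one x]

lemma mul_hEI_div_le {s : ℝ} (hs : 0 ≤ s) (a : ℝ) : s * hEI (a / s) ≤ max a 0 + s := by
  rcases hs.eq_or_lt with rfl | hs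
  · simp
  calc s * hEI (a / s) ≤ s * (max (a / s) 0 + 1) :=
        mul_le_mul_of_nonneg_left (hEI_le_max_add_one _) hs.le
    _ = max a 0 + s := by
        rw [mul_add, mul_one, mul_max_of_nonneg _ _ hs.le, mul_zero, mul_div_cancel₀ _ hs.ne']

theorem EI_upper_bound_general {Z : Type*} (g μ σ : Z → ℝ) (R : ℝ)
    (herr : ∀ w, |μ w - g w| ≤ R * σ w)
    (n : ℕ) (zs : Fin (n + 1) → Z) (z : Z) (hσ : 0 ≤ σ z) :
    σ z * hEI ((μ z - Finset.univ.sup' Finset.univ_nonempty (fun i => g (zs i))) / σ z)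
      ≤ max 0 (g z - Finset.univ.sup' Finset.univ_nonempty (fun i => g (zs i)))
        + (R + 1) * σ z := by
  set ξ := Finset.univ.sup' Finset.univ_nonempty (fun i => g (zs i))
  have hRσ : 0 ≤ R * σ z := (abs_nonneg _).trans (herr z)
  have hμ : μ z ≤ g z + R * σ z := by linarith [(abs_le.mp (herr z)).2]
  have hmax : max (μ z - ξ) 0 ≤ max 0 (g z - ξ) + R * σ z :=
    max_le (by linarith [le_max_right 0 (g z - ξ)]) (by linarith [le_max_left 0 (g z - ξ)])
  calc σ z * hEI ((μ z - ξ) / σ z) ≤ max (μ z - ξ) 0 + σ z := mul_hEI_div_le hσ _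
    _ ≤ max 0 (g z - ξ) + (R + 1) * σ z := by linarith

theorem EI_upper_bound {Z : Type*} (g μ σ : Z → ℝ) (R : ℝ) (hR : 0 ≤ R)
    (herr : ∀ w, |μ w - g w| ≤ R * σ w)
    (n : ℕ) (zs : Fin (n + 1) → Z) (z : Z) (hσ : 0 ≤ σ z) :
    σ z * hEI ((μ z - Finset.univ.sup' Finset.univ_nonempty (fun i => g (zs i))) / σ z)
      ≤ max 0 (g z - Finset.univ.sup' Finset.univ_nonempty (fun i => g (zs i)))
        + (R + 1) * σ z :=
  EI_upper_bound_general g μ σ R herr n zs z hσ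
end

section
/- Under the same setup (|μ_n(z) − g(z)| ≤ R σ_n(z), σ_n(z) ≥ 0, ξ_n = max_{i≤n} g(z_i), I_n(z) = max{0, g(z) − ξ_n}, α_n^{EI}(z) = σ_n(z)h((μ_n(z) − ξ_n)/σ_n(z)) with h(x) = xΦ(x) + φ(x)), the expected improvement satisfies α_n^{EI}(z) ≥ max{ I_n(z) − R σ_n(z), (h(−R)/h(R))·I_n(z) }. -/
open Real MeasureTheory Set Filter

lemma stdPdf_eq (x : ℝ) : stdPdf x = (Real.sqrt (2 * Real.pi))⁻¹ * Real.exp (-(1/2) * x ^ 2) := by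
  unfold stdPdf; ring_nf

lemma stdPdf_pos (x : ℝ) : 0 < stdPdf x := by
  unfold stdPdf
  positivity

lemma stdPdf_cont : Continuous stdPdf := by
  unfold stdPdf
  continuity

lemma stdPdf_integrable : Integrable stdPdf := by
  simp only [funext stdPdf_eq]
  exact (integrable_exp_neg_mul_sq (by norm_num : (0:ℝ) < 1/2)).const_mul _

lemma integral_stdPdf : ∫ x, stdPdf x = 1 := by
  simp only [funext stdPdf_eq]
  rw [integral_const_mul, integral_gaussian]
  rw [show (π / (1/2)) = 2 * π by ring]
  rw [inv_mul_cancel₀]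
  positivity

lemma mul_stdPdf_integrable : Integrable (fun x => x * stdPdf x) := by
  have : (fun x => x * stdPdf x) = fun x => (Real.sqrt (2 * Real.pi))⁻¹ * (x * Real.exp (-(1/2) * x ^ 2)) := by
    funext x; rw [stdPdf_eq]; ring
  rw [this]
  exact (integrable_mul_exp_neg_mul_sq (by norm_num : (0:ℝ) < 1/2)).const_mul _

lemma stdPdf_neg (x : ℝ) : stdPdf (-x) = stdPdf x := by unfold stdPdf; ring_nf

lemma stdPdf_tendsto_atTop : Tendsto stdPdf atTop (nhds 0) := by
  have h1 : Tendsto (fun x : ℝ => -x ^ 2 / 2) atTop atBot := by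
    apply Tendsto.atBot_div_const (by norm_num)
    exact tendsto_neg_atTop_atBot.comp (tendsto_pow_atTop two_ne_zero)
  have := (Real.tendsto_exp_atBot.comp h1).const_mul (Real.sqrt (2 * Real.pi))⁻¹
  rw [mul_zero] at this
  exact this

lemma stdPdf_tendsto_atBot : Tendsto stdPdf atBot (nhds 0) := by
  have := stdPdf_tendsto_atTop.comp tendsto_neg_atBot_atTop
  refine this.congr (fun x => ?_)
  simp only [Function.comp_apply, stdPdf_neg]

lemma hasDerivAt_stdPdf (x : ℝ) : HasDerivAt stdPdf (-(x * stdPdf x)) x := by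
  have h : HasDerivAt (fun t : ℝ => -t ^ 2 / 2) (-x) x := by
    have := ((hasDerivAt_pow 2 x).neg).div_const 2
    refine this.congr_deriv ?_
    simp; ring
  have := (h.exp).const_mul (Real.sqrt (2 * Real.pi))⁻¹
  unfold stdPdf
  refine this.congr_deriv ?_
  ring

lemma integral_Iic_mul_stdPdf (x : ℝ) : ∫ t in Set.Iic x, t * stdPdf t = -stdPdf x := by
  have := integral_Iic_of_hasDerivAt_of_tendsto' (f := fun t => -stdPdf t)
    (f' := fun t => t * stdPdf t) (a := x) (m := 0)
    (fun t _ => by have := (hasDerivAt_stdPdf t).neg; rw [neg_neg] at this; exact this)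
    (mul_stdPdf_integrable.integrableOn)
    (by simpa using stdPdf_tendsto_atBot.neg)
  simpa using this

lemma stdCdf_nonneg (x : ℝ) : 0 ≤ stdCdf x :=
  setIntegral_nonneg measurableSet_Iic (fun t _ => (stdPdf_pos t).le)

lemma stdCdf_pos (x : ℝ) : 0 < stdCdf x := by
  rw [stdCdf, setIntegral_pos_iff_support_of_nonneg_ae]
  · have h : Function.support stdPdf ∩ Set.Iic x = Set.Iic x := by
      rw [Set.inter_eq_right]
      intro t _
      exact (stdPdf_pos t).ne'
    rw [h]
    simp
  · filter_upwards with t using (stdPdf_pos t).le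
  · exact stdPdf_integrable.integrableOn

lemma stdCdf_le_one (x : ℝ) : stdCdf x ≤ 1 := by
  rw [← integral_stdPdf, stdCdf]
  exact setIntegral_le_integral stdPdf_integrable
    (by filter_upwards with t using (stdPdf_pos t).le)

lemma stdCdf_add_neg (x : ℝ) : stdCdf x + stdCdf (-x) = 1 := by
  have h1 : stdCdf x = ∫ t in Set.Ioi (-x), stdPdf t := by
    calc stdCdf x = ∫ t in Set.Iic x, stdPdf (-t) := by simp only [stdCdf, stdPdf_neg]
    _ = ∫ t in Set.Ioi (-x), stdPdf t := integral_comp_neg_Iic x stdPdf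
  have h2 := MeasureTheory.integral_add_compl (measurableSet_Iic (a := -x)) stdPdf_integrable
    (f := stdPdf) (μ := volume)
  rw [compl_Iic] at h2
  rw [h1, stdCdf, add_comm, ← integral_stdPdf]
  exact h2

lemma hasDerivAt_stdCdf (x : ℝ) : HasDerivAt stdCdf (stdPdf x) x := by
  have heq : stdCdf = fun y => stdCdf 0 + ∫ t in (0:ℝ)..y, stdPdf t := by
    funext y
    rw [← intervalIntegral.integral_Iic_sub_Iic stdPdf_integrable.integrableOn
      stdPdf_integrable.integrableOn]
    simp [stdCdf]
  rw [heq]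
  exact (intervalIntegral.integral_hasDerivAt_right
    stdPdf_integrable.intervalIntegrable
    stdPdf_cont.stronglyMeasurable.stronglyMeasurableAtFilter
    stdPdf_cont.continuousAt).const_add _

lemma hasDerivAt_hEI (x : ℝ) : HasDerivAt hEI (stdCdf x) x := by
  have h1 := ((hasDerivAt_id x).mul (hasDerivAt_stdCdf x)).add (hasDerivAt_stdPdf x)
  have : hEI = fun y => y * stdCdf y + stdPdf y := by funext y; rfl
  rw [this]
  refine h1.congr_deriv ?_
  simp only [id]
  ring

lemma hEI_strictMono : StrictMono hEI :=
  strictMono_of_deriv_pos (fun x => by rw [(hasDerivAt_hEI x).deriv]; exact stdCdf_pos x)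

lemma hEI_mono : Monotone hEI := hEI_strictMono.monotone

lemma integral_mul_stdPdf_zero : ∫ t, t * stdPdf t = 0 := by
  have h := integral_neg_eq_self (fun t => t * stdPdf t) (volume : Measure ℝ)
  simp only [stdPdf_neg, neg_mul] at h
  rw [integral_neg] at h
  linarith

lemma integral_Ioi_mul_stdPdf (x : ℝ) : ∫ t in Set.Ioi x, t * stdPdf t = stdPdf x := by
  have h2 := MeasureTheory.integral_add_compl (measurableSet_Iic (a := x))
    mul_stdPdf_integrable (f := fun t => t * stdPdf t) (μ := volume)
  rw [compl_Iic, integral_Iic_mul_stdPdf, integral_mul_stdPdf_zero] at h2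
  linarith

lemma integral_Ioi_stdPdf (x : ℝ) : ∫ t in Set.Ioi x, stdPdf t = 1 - stdCdf x := by
  have h2 := MeasureTheory.integral_add_compl (measurableSet_Iic (a := x))
    stdPdf_integrable (f := stdPdf) (μ := volume)
  rw [compl_Iic, integral_stdPdf] at h2
  have : stdCdf x = ∫ t in Set.Iic x, stdPdf t := rfl
  linarith

lemma le_hEI (x : ℝ) : x ≤ hEI x := by
  have key : hEI x - x = ∫ t in Set.Ioi x, (t - x) * stdPdf t := by
    have hi1 : IntegrableOn (fun t => t * stdPdf t) (Set.Ioi x) := mul_stdPdf_integrable.integrableOn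
    have hi2 : IntegrableOn (fun t => x * stdPdf t) (Set.Ioi x) :=
      (stdPdf_integrable.const_mul x).integrableOn
    have : ∫ t in Set.Ioi x, (t - x) * stdPdf t
        = (∫ t in Set.Ioi x, t * stdPdf t) - ∫ t in Set.Ioi x, x * stdPdf t := by
      rw [← integral_sub hi1 hi2]
      congr 1; funext t; ring
    rw [this, integral_Ioi_mul_stdPdf, integral_const_mul, integral_Ioi_stdPdf]
    unfold hEI
    ring
  have hnn : 0 ≤ ∫ t in Set.Ioi x, (t - x) * stdPdf t :=
    setIntegral_nonneg measurableSet_Ioi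
      (fun t ht => mul_nonneg (by simp at ht; linarith) (stdPdf_pos t).le)
  linarith

lemma hEI_pos (x : ℝ) : 0 < hEI x := by
  have key : hEI x = ∫ t in Set.Iic x, (x - t) * stdPdf t := by
    have hi1 : IntegrableOn (fun t => x * stdPdf t) (Set.Iic x) :=
      (stdPdf_integrable.const_mul x).integrableOn
    have hi2 : IntegrableOn (fun t => t * stdPdf t) (Set.Iic x) := mul_stdPdf_integrable.integrableOn
    have : ∫ t in Set.Iic x, (x - t) * stdPdf t
        = (∫ t in Set.Iic x, x * stdPdf t) - ∫ t in Set.Iic x, t * stdPdf t := by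
      rw [← integral_sub hi1 hi2]
      congr 1; funext t; ring
    rw [this, integral_const_mul, integral_Iic_mul_stdPdf]
    show x * stdCdf x + stdPdf x = _
    rw [show stdCdf x = ∫ t in Set.Iic x, stdPdf t from rfl]
    ring
  rw [key, setIntegral_pos_iff_support_of_nonneg_ae]
  · have h : Function.support (fun t => (x - t) * stdPdf t) ∩ Set.Iic x = Set.Iio x := by
      ext t
      simp only [Function.mem_support, Set.mem_inter_iff, Set.mem_Iic, Set.mem_Iio]
      constructor
      · rintro ⟨hne, hle⟩
        rcases lt_or_eq_of_le hle with h | h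
        · exact h
        · exact absurd (by rw [h]; ring) hne
      · intro h
        exact ⟨mul_ne_zero (by linarith) (stdPdf_pos t).ne', h.le⟩
    rw [h]
    simp
  · filter_upwards [ae_restrict_mem measurableSet_Iic] with t ht
    exact mul_nonneg (by simp at ht; linarith) (stdPdf_pos t).le
  · exact ((stdPdf_integrable.const_mul x).sub mul_stdPdf_integrable).integrableOn.congr
      (ae_of_all _ (fun t => by simp; ring))

lemma hEI_sub_neg (x : ℝ) : hEI x - hEI (-x) = x := by
  have h1 := stdCdf_add_neg x
  have h2 := stdPdf_neg x
  have h3 : x * stdCdf x + x * stdCdf (-x) = x := by rw [← mul_add, h1, mul_one]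
  unfold hEI
  linarith

theorem EI_lower_bound {Z : Type*} (g μ σ : Z → ℝ) (R : ℝ) (hR : 0 ≤ R)
    (herr : ∀ w, |μ w - g w| ≤ R * σ w)
    (n : ℕ) (zs : Fin (n + 1) → Z) (z : Z) (hσ : 0 < σ z) :
    max (max 0 (g z - Finset.univ.sup' Finset.univ_nonempty (fun i => g (zs i))) - R * σ z)
        (hEI (-R) / hEI R *
          max 0 (g z - Finset.univ.sup' Finset.univ_nonempty (fun i => g (zs i))))
      ≤ σ z * hEI ((μ z - Finset.univ.sup' Finset.univ_nonempty (fun i => g (zs i))) / σ z) := by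
  set ξ := Finset.univ.sup' Finset.univ_nonempty (fun i => g (zs i)) with hξ
  set u := (μ z - ξ) / σ z with hudef
  have hz := (abs_le.mp (herr z)).1
  have hu : (g z - ξ) / σ z - R ≤ u := by
    rw [hudef, div_sub' hσ.ne', div_le_div_iff₀ hσ hσ]
    nlinarith
  apply max_le
  · rcases le_or_gt (g z - ξ) 0 with h | h
    · rw [max_eq_left h]
      nlinarith [mul_nonneg hR hσ.le, mul_pos hσ (hEI_pos u)]
    · rw [max_eq_right h.le]
      have h1 : (g z - ξ) / σ z - R ≤ hEI u := le_trans hu (le_hEI u)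
      calc g z - ξ - R * σ z = ((g z - ξ) / σ z - R) * σ z := by field_simp
        _ ≤ hEI u * σ z := mul_le_mul_of_nonneg_right h1 hσ.le
        _ = σ z * hEI u := mul_comm _ _
  · rcases le_or_gt (g z - ξ) 0 with h | h
    · rw [max_eq_left h, mul_zero]
      exact (mul_pos hσ (hEI_pos u)).le
    · rw [max_eq_right h.le]
      set t := (g z - ξ) / σ z with ht
      have ht0 : 0 < t := div_pos h hσ
      have hgz : g z - ξ = t * σ z := by rw [ht]; field_simp
      have hmono : hEI (t - R) ≤ hEI u := hEI_mono (by linarith)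
      have hkey : hEI (-R) / hEI R * t ≤ hEI (t - R) := by
        rcases le_or_gt t (hEI R) with hc | hc
        · have h1 : hEI (-R) ≤ hEI (t - R) := hEI_mono (by linarith)
          have h2 : hEI (-R) / hEI R * t ≤ hEI (-R) := by
            rw [div_mul_eq_mul_div, div_le_iff₀ (hEI_pos R)]
            exact mul_le_mul_of_nonneg_left hc (hEI_pos (-R)).le
          linarith
        · have h1 : t - R ≤ hEI (t - R) := le_hEI _
          have hsub := hEI_sub_neg R
          have h2 : hEI (-R) / hEI R * t ≤ t - R := by
            rw [div_mul_eq_mul_div, div_le_iff₀ (hEI_pos R)]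
            nlinarith [mul_nonneg hR (sub_nonneg.mpr hc.le)]
          linarith
      calc hEI (-R) / hEI R * (g z - ξ) = (hEI (-R) / hEI R * t) * σ z := by rw [hgz]; ring
        _ ≤ hEI (t - R) * σ z := mul_le_mul_of_nonneg_right hkey hσ.le
        _ ≤ hEI u * σ z := mul_le_mul_of_nonneg_right hmono hσ.le
        _ = σ z * hEI u := mul_comm _ _
end
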